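/- Fix k and suppose: (a) for μ-a.e. θ, p·ψ_k(θ,p) → 0 as p ↑ ς_*; (b) there exist p̄ ∈ [0,ς_*) and a μ-integrable φ : T → [0,∞) with p·ψ_k(θ,p) ≤ φ(θ) for all p ∈ (p̄,ς_*) and μ-a.e. θ; and (c) for μ-a.e. θ, P_k^L(θ,p) → 0 as p_k ↑ ς(θ). Then, holding the other components of p fixed, p_k·|λ_k(p)| → 0 and p_k·|γ_{j,k}(p)| → 0 for every j as p_k ↑ ς_*, and consequently the profit derivative (∂π̂_{f(k)}/∂p_k)(p) = Σ_{j∈J_{f(k)}} (δ_{j,k}λ_j(p) − γ_{j,k}(p))(p_j − c_j) + P_k(p) tends to 0 as p_k ↑ ς_*. -/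

import Mathlib

/-!
Along `p_k ↑ ς_*` both `p_k λ_k` and `p_k γ_{j,k}` are integrals of functions bounded in absolute
value by `p_k ψ_k(θ, p_k)`, since `|Dw_k| P_k^L ≤ ψ_k` and `P_j^L ≤ 1`; by (a) and (b) dominated
convergence sends them to `0`. Since the moving price stays above the given `p_k > 0`, also `λ_k`
and `γ_{j,k}` themselves vanish, and `P_k → 0` by bounded convergence from (c): for types with
`ς(θ) < ς_*` the share `P_k^L` is eventually `0`. Each term of the profit derivative is a
combination of these quantities with coefficients at most linear in `p_k`.
-/

open MeasureTheory Filter Topology Set Function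

section Filters

variable {l : Filter ℝ} {f : ℝ → ℝ}

lemma EReal.eventually_coe_mem_Ioo {b S : EReal} (hb : b < S) :
    ∀ᶠ q : ℝ in comap (↑) (𝓝[<] S), (q : EReal) ∈ Ioo b S :=
  preimage_mem_comap (Ioo_mem_nhdsLT hb)

lemma EReal.tendsto_comap_coe_nhdsLT_of_le {s S : EReal} (hsS : s ≤ S)
    (hf_zero : ∀ q : ℝ, s ≤ q → f q = 0) (hf : Tendsto f (comap (↑) (𝓝[<] s)) (𝓝 0)) :
    Tendsto f (comap (↑) (𝓝[<] S)) (𝓝 0) := by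
  rcases hsS.lt_or_eq with hlt | rfl
  · exact tendsto_const_nhds.congr'
      ((eventually_coe_mem_Ioo hlt).mono fun q hq => (hf_zero q hq.1.le).symm)
  · exact hf

lemma tendsto_zero_of_tendsto_mul_self {a : ℝ} (ha : 0 < a) (hl : ∀ᶠ q in l, a ≤ q)
    (h : Tendsto (fun q => q * f q) l (𝓝 0)) : Tendsto f l (𝓝 0) := by
  refine squeeze_zero_norm' (a := fun q => a⁻¹ * |q * f q|) ?_ (by simpa using h.abs.const_mul a⁻¹)
  filter_upwards [hl] with q hq
  rw [Real.norm_eq_abs, le_inv_mul_iff₀ ha, abs_mul]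
  exact mul_le_mul_of_nonneg_right (hq.trans (le_abs_self q)) (abs_nonneg _)

lemma tendsto_mul_abs_of_tendsto_mul (hl : ∀ᶠ q in l, 0 ≤ q)
    (h : Tendsto (fun q => q * f q) l (𝓝 0)) : Tendsto (fun q => q * |f q|) l (𝓝 0) :=
  (by simpa using h.abs : Tendsto (fun q => |q * f q|) l (𝓝 0)).congr'
    (hl.mono fun q hq => by rw [abs_mul, abs_of_nonneg hq])

lemma tendsto_mul_update_sub {ι : Type*} [DecidableEq ι] (p c : ι → ℝ) (k j : ι)
    (h : Tendsto (fun q => q * f q) l (𝓝 0)) (h₀ : Tendsto f l (𝓝 0)) :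
    Tendsto (fun q => f q * (update p k q j - c j)) l (𝓝 0) := by
  by_cases hjk : j = k
  · subst hjk
    simpa [mul_sub, mul_comm] using h.sub (h₀.const_mul (c j))
  · simpa [update_of_ne hjk] using h₀.mul_const (p j - c j)

lemma tendsto_sum_coef_mul_update_sub_add {ι : Type*} [DecidableEq ι] {a : ℝ} (ha : 0 < a)
    (hl : ∀ᶠ q in l, a ≤ q) (s : Finset ι) (p c : ι → ℝ) (k : ι) {Λ Γ : ℝ → ι → ℝ}
    {P : ℝ → ℝ} (hΛ : Tendsto (fun q => q * Λ q k) l (𝓝 0))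
    (hΓ : ∀ j, Tendsto (fun q => q * Γ q j) l (𝓝 0)) (hP : Tendsto P l (𝓝 0)) :
    Tendsto (fun q => (∑ j ∈ s, ((if j = k then Λ q j else 0) - Γ q j) * (update p k q j - c j))
      + P q) l (𝓝 0) := by
  have hcoef : ∀ j, Tendsto (fun q => q * ((if j = k then Λ q j else 0) - Γ q j)) l (𝓝 0) := by
    intro j
    by_cases hjk : j = k
    · subst hjk
      simpa [mul_sub] using hΛ.sub (hΓ j)
    · simpa [hjk] using (hΓ j).neg
  simpa using (tendsto_finsetSum s fun j _ => tendsto_mul_update_sub p c k j (hcoef j)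
    (tendsto_zero_of_tendsto_mul_self ha hl (hcoef j))).add hP

end Filters

section Logit

lemma abs_mul_mul_le_of_mem_Icc {x y d : ℝ} (hx : x ∈ Icc 0 1) (hy : 0 ≤ y) :
    |x * y * d| ≤ |d| * y := by
  rw [abs_mul, abs_mul, abs_of_nonneg hx.1, abs_of_nonneg hy]
  nlinarith [hx.2, mul_nonneg hy (abs_nonneg d)]

variable {J : ℕ} {T : Type*} {e : Fin J → T → ℝ → ℝ} {ϑ : T → ℝ}

/-- The logit choice probability `P_j^L(θ, r)`, where `e j θ q` stands for `exp (u_j(θ, q))`. -/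
noncomputable def logitShare (e : Fin J → T → ℝ → ℝ) (ϑ : T → ℝ) (j : Fin J) (θ : T)
    (r : Fin J → ℝ) : ℝ :=
  e j θ (r j) / (Real.exp (ϑ θ) + ∑ i, e i θ (r i))

lemma logitShare_mem_Icc (he : ∀ j θ q, 0 ≤ e j θ q) (j : Fin J) (θ : T) (r : Fin J → ℝ) :
    logitShare e ϑ j θ r ∈ Icc 0 1 := by
  have hsum : e j θ (r j) ≤ ∑ i, e i θ (r i) :=
    Finset.single_le_sum (fun i _ => he i θ (r i)) (Finset.mem_univ j)
  have hden : e j θ (r j) ≤ Real.exp (ϑ θ) + ∑ i, e i θ (r i) := by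
    linarith [Real.exp_pos (ϑ θ)]
  exact ⟨div_nonneg (he j θ _) (by linarith [he j θ (r j)]),
    div_le_one_of_le₀ hden (by linarith [he j θ (r j)])⟩

lemma logitShare_le_div_add_self (he : ∀ j θ q, 0 ≤ e j θ q) (j : Fin J) (θ : T)
    (r : Fin J → ℝ) :
    logitShare e ϑ j θ r ≤ e j θ (r j) / (Real.exp (ϑ θ) + e j θ (r j)) :=
  div_le_div_of_nonneg_left (he j θ _) (by linarith [he j θ (r j), Real.exp_pos (ϑ θ)])
    (by linarith [Finset.single_le_sum (fun i _ => he i θ (r i)) (Finset.mem_univ j)])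

section ChokePrice

variable {w : Fin J → T → ℝ → ℝ} {v : Fin J → T → ℝ} {ς : T → EReal}

lemma logitShare_eq_zero_of_le (he : ∀ j θ q, e j θ q =
      if (q : EReal) < ς θ then Real.exp (w j θ q + v j θ) else 0)
    {j : Fin J} {θ : T} {r : Fin J → ℝ} (h : ς θ ≤ r j) : logitShare e ϑ j θ r = 0 := by
  rw [logitShare, he, if_neg h.not_gt, zero_div]

lemma abs_mul_logitShare_le (he : ∀ j θ q, e j θ q =
      if (q : EReal) < ς θ then Real.exp (w j θ q + v j θ) else 0)
    (d : ℝ) (k : Fin J) (θ : T) (r : Fin J → ℝ) :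
    |d| * logitShare e ϑ k θ r ≤ if (r k : EReal) < ς θ then
      |d| * (Real.exp (w k θ (r k) + v k θ) / (Real.exp (ϑ θ) + Real.exp (w k θ (r k) + v k θ)))
      else 0 := by
  have he_nonneg : ∀ j θ q, 0 ≤ e j θ q := fun j θ q => by rw [he]; split_ifs <;> positivity
  split_ifs with h
  · simpa [he k θ (r k), h] using mul_le_mul_of_nonneg_left
      (logitShare_le_div_add_self (ϑ := ϑ) he_nonneg k θ r) (abs_nonneg d)
  · rw [logitShare_eq_zero_of_le he (not_lt.mp h), mul_zero]

end ChokePrice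

lemma aestronglyMeasurable_logitShare [MeasurableSpace T] {μ : Measure T}
    (he : ∀ j q, AEStronglyMeasurable (fun θ => e j θ q) μ)
    (hϑ : AEStronglyMeasurable (fun θ => Real.exp (ϑ θ)) μ) (j : Fin J) (r : Fin J → ℝ) :
    AEStronglyMeasurable (fun θ => logitShare e ϑ j θ r) μ :=
  ((he j _).aemeasurable.div (hϑ.add
    (Finset.aestronglyMeasurable_fun_sum _ fun i _ => he i _)).aemeasurable).aestronglyMeasurable

end Logit

section DominatedConvergence

variable {T : Type*} [MeasurableSpace T] {μ : Measure T}

lemma tendsto_mul_integral_of_abs_le {l : Filter ℝ} [l.IsCountablyGenerated]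
    {ψ : T → ℝ → ℝ} {φ : T → ℝ} {g : ℝ → T → ℝ}
    (hl : ∀ᶠ q in l, 0 ≤ q) (hψ : ∀ᵐ θ ∂μ, Tendsto (fun q => q * ψ θ q) l (𝓝 0))
    (hφ : Integrable φ μ) (hψφ : ∀ᶠ q in l, ∀ᵐ θ ∂μ, q * ψ θ q ≤ φ θ)
    (hg : ∀ q, AEStronglyMeasurable (g q) μ) (hgψ : ∀ θ q, |g q θ| ≤ ψ θ q) :
    Tendsto (fun q => q * ∫ θ, g q θ ∂μ) l (𝓝 0) := by
  simp_rw [← integral_const_mul]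
  have hbound : ∀ᶠ q in l, ∀ θ, ‖q * g q θ‖ ≤ q * ψ θ q := hl.mono fun q hq θ => by
    rw [Real.norm_eq_abs, abs_mul, abs_of_nonneg hq]
    exact mul_le_mul_of_nonneg_left (hgψ θ q) hq
  simpa using tendsto_integral_filter_of_dominated_convergence φ
    (Eventually.of_forall fun q => (hg q).const_mul q)
    ((hbound.and hψφ).mono fun q hq => hq.2.mono fun θ hθ => (hq.1 θ).trans hθ) hφ
    (hψ.mono fun θ hθ => squeeze_zero_norm' (hbound.mono fun q hq => hq θ) hθ)

lemma tendsto_mul_setIntegral_of_abs_le {l : Filter ℝ} [l.IsCountablyGenerated]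
    {ψ : T → ℝ → ℝ} {φ : T → ℝ} {g : ℝ → T → ℝ} {s : ℝ → Set T}
    (hl : ∀ᶠ q in l, 0 ≤ q) (hψ : ∀ᵐ θ ∂μ, Tendsto (fun q => q * ψ θ q) l (𝓝 0))
    (hφ : Integrable φ μ) (hψφ : ∀ᶠ q in l, ∀ᵐ θ ∂μ, q * ψ θ q ≤ φ θ)
    (hg : ∀ q, AEStronglyMeasurable (g q) μ) (hg_zero : ∀ q, ∀ θ ∉ s q, g q θ = 0)
    (hgψ : ∀ θ q, |g q θ| ≤ ψ θ q) :
    Tendsto (fun q => q * ∫ θ in s q, g q θ ∂μ) l (𝓝 0) := by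
  simp_rw [setIntegral_eq_integral_of_forall_compl_eq_zero (hg_zero _)]
  exact tendsto_mul_integral_of_abs_le hl hψ hφ hψφ hg hgψ

lemma tendsto_integral_comap_coe_nhdsLT_essSup [IsFiniteMeasure μ] {ς : T → EReal}
    {g : ℝ → T → ℝ} {C : ℝ} (hg : ∀ q, AEStronglyMeasurable (g q) μ) (hgC : ∀ q θ, |g q θ| ≤ C)
    (hg_zero : ∀ (q : ℝ) θ, ς θ ≤ q → g q θ = 0)
    (hg_lim : ∀ᵐ θ ∂μ, Tendsto (fun q => g q θ) (comap (↑) (𝓝[<] ς θ)) (𝓝 0)) :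
    Tendsto (fun q => ∫ θ, g q θ ∂μ) (comap (↑) (𝓝[<] essSup ς μ)) (𝓝 0) := by
  simpa using tendsto_integral_filter_of_norm_le_const (f := fun _ => 0)
    (Eventually.of_forall hg) ⟨C, Eventually.of_forall fun q => ae_of_all _ (hgC q)⟩
    (by
      filter_upwards [hg_lim, (ae_le_essSup : ∀ᵐ θ ∂μ, ς θ ≤ essSup ς μ)] with θ hθ hθS
      exact EReal.tendsto_comap_coe_nhdsLT_of_le hθS (fun q hq => hg_zero q θ hq) hθ)

end DominatedConvergence

theorem stmt10_general {J F : ℕ} {T : Type*} [MeasurableSpace T]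
    (μ : Measure T) [IsProbabilityMeasure μ]
    (w Dw : Fin J → T → ℝ → ℝ) (v : Fin J → T → ℝ)
    (ϑ : T → ℝ) (ς : T → EReal)
    (e : Fin J → T → ℝ → ℝ)
    (he : ∀ j θ q, e j θ q =
      if (q : EReal) < ς θ then Real.exp (w j θ q + v j θ) else 0)
    (hmease : ∀ j q, AEStronglyMeasurable (fun θ => e j θ q) μ)
    (hmeasϑ : AEStronglyMeasurable (fun θ => Real.exp (ϑ θ)) μ)
    (hmeasDw : ∀ j q, AEStronglyMeasurable (fun θ => Dw j θ q) μ)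
    (PL : Fin J → T → (Fin J → ℝ) → ℝ)
    (hPLdef : ∀ j θ r, PL j θ r = e j θ (r j) / (Real.exp (ϑ θ) + ∑ i, e i θ (r i)))
    (P : Fin J → (Fin J → ℝ) → ℝ)
    (hPdef : ∀ j r, P j r = ∫ θ, PL j θ r ∂μ)
    (lam : (Fin J → ℝ) → Fin J → ℝ)
    (hlam : ∀ r j, lam r j =
      ∫ θ in {θ | (r j : EReal) < ς θ}, Dw j θ (r j) * PL j θ r ∂μ)
    (gam : (Fin J → ℝ) → Fin J → Fin J → ℝ)
    (hgam : ∀ r j k', gam r j k' =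
      ∫ θ in {θ | (r j : EReal) < ς θ ∧ (r k' : EReal) < ς θ},
        PL j θ r * PL k' θ r * Dw k' θ (r k') ∂μ)
    (ψ : Fin J → T → ℝ → ℝ)
    (hψ : ∀ i θ q, ψ i θ q = if (q : EReal) < ς θ then
      |Dw i θ q| * (Real.exp (w i θ q + v i θ) /
        (Real.exp (ϑ θ) + Real.exp (w i θ q + v i θ))) else 0)
    (firm : Fin J → Fin F) (c : Fin J → ℝ)
    (p : Fin J → ℝ) (hp : ∀ j, 0 < p j ∧ (p j : EReal) < essSup ς μ)
    (k : Fin J)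
    -- assumption (a): p ψ_k(θ,p) → 0 as p ↑ ς_*, μ-a.e.
    (ha : ∀ᵐ θ ∂μ, Tendsto (fun q : ℝ => q * ψ k θ q)
      (comap (fun q : ℝ => (q : EReal)) (nhdsWithin (essSup ς μ) (Set.Iio (essSup ς μ))))
      (nhds 0))
    -- assumption (b): p ψ_k(θ,p) is dominated by an integrable φ for p ∈ (p̄, ς_*)
    (hb : ∃ pbar : ℝ, 0 ≤ pbar ∧ (pbar : EReal) < essSup ς μ ∧
      ∃ φ : T → ℝ, Integrable φ μ ∧
        ∀ᵐ θ ∂μ, ∀ q : ℝ, pbar < q → (q : EReal) < essSup ς μ → q * ψ k θ q ≤ φ θ)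
    -- assumption (c): P_k^L(θ,p) → 0 as p_k ↑ ς(θ), μ-a.e.
    (hc : ∀ᵐ θ ∂μ, Tendsto (fun q : ℝ => PL k θ (Function.update p k q))
      (comap (fun q : ℝ => (q : EReal)) (nhdsWithin (ς θ) (Set.Iio (ς θ)))) (nhds 0)) :
    Tendsto (fun q : ℝ => q * |lam (Function.update p k q) k|)
      (comap (fun q : ℝ => (q : EReal)) (nhdsWithin (essSup ς μ) (Set.Iio (essSup ς μ))))
      (nhds 0) ∧
    (∀ j, Tendsto (fun q : ℝ => q * |gam (Function.update p k q) j k|)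
      (comap (fun q : ℝ => (q : EReal)) (nhdsWithin (essSup ς μ) (Set.Iio (essSup ς μ))))
      (nhds 0)) ∧
    Tendsto (fun q : ℝ =>
      (∑ j ∈ Finset.univ.filter (fun j => firm j = firm k),
        ((if j = k then lam (Function.update p k q) j else 0)
            - gam (Function.update p k q) j k)
          * (Function.update p k q j - c j))
        + P k (Function.update p k q))
      (comap (fun q : ℝ => (q : EReal)) (nhdsWithin (essSup ς μ) (Set.Iio (essSup ς μ))))
      (nhds 0) := by
  obtain ⟨pbar, -, hpbarS, φ, hφ, hφbound⟩ := hb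
  obtain rfl : PL = logitShare e ϑ := by ext j θ r; exact hPLdef j θ r
  set l := comap (fun q : ℝ => (q : EReal)) (𝓝[<] essSup ς μ)
  have hpk : ∀ᶠ q in l, p k ≤ q := (EReal.eventually_coe_mem_Ioo (hp k).2).mono
    fun q hq => EReal.coe_le_coe_iff.mp hq.1.le
  have hl_nonneg : ∀ᶠ q in l, 0 ≤ q := hpk.mono fun q hq => (hp k).1.le.trans hq
  have hψφ : ∀ᶠ q in l, ∀ᵐ θ ∂μ, q * ψ k θ q ≤ φ θ :=
    (EReal.eventually_coe_mem_Ioo hpbarS).mono fun q hq =>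
      hφbound.mono fun θ hθ => hθ q (EReal.coe_lt_coe_iff.mp hq.1) hq.2
  have he_nonneg : ∀ j θ q, 0 ≤ e j θ q := fun j θ q => by rw [he]; split_ifs <;> positivity
  have hPL := logitShare_mem_Icc (ϑ := ϑ) he_nonneg
  have hPL_meas := aestronglyMeasurable_logitShare hmease hmeasϑ
  have hPLψ : ∀ θ q, |Dw k θ q| * logitShare e ϑ k θ (update p k q) ≤ ψ k θ q := fun θ q => by
    simpa [hψ] using abs_mul_logitShare_le he (Dw k θ q) k θ (update p k q)
  have hqlam : Tendsto (fun q => q * lam (update p k q) k) l (𝓝 0) := by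
    simp only [hlam, update_self]
    refine tendsto_mul_setIntegral_of_abs_le hl_nonneg ha hφ hψφ
      (fun q => (hmeasDw k q).mul (hPL_meas k _))
      (fun q θ hθ => by
        rw [logitShare_eq_zero_of_le he (j := k) (by simpa using not_lt.mp hθ), mul_zero]) fun θ q => ?_
    simpa [abs_mul, abs_of_nonneg (hPL k θ _).1] using hPLψ θ q
  have hqgam : ∀ j, Tendsto (fun q => q * gam (update p k q) j k) l (𝓝 0) := by
    intro j
    simp only [hgam, update_self]
    refine tendsto_mul_setIntegral_of_abs_le hl_nonneg ha hφ hψφ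
      (fun q => ((hPL_meas j _).mul (hPL_meas k _)).mul (hmeasDw k q)) (fun q θ hθ => ?_)
      fun θ q => (abs_mul_mul_le_of_mem_Icc (hPL j θ _) (hPL k θ _).1).trans (hPLψ θ q)
    rcases not_and_or.mp hθ with h | h
    · rw [logitShare_eq_zero_of_le he (not_lt.mp h), zero_mul, zero_mul]
    · rw [logitShare_eq_zero_of_le he (j := k) (by simpa using not_lt.mp h),
        mul_zero, zero_mul]
  have hP : Tendsto (fun q => P k (update p k q)) l (𝓝 0) := by
    simp only [hPdef]
    exact tendsto_integral_comap_coe_nhdsLT_essSup (C := 1) (fun q => hPL_meas k _)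
      (fun q θ => abs_le.mpr ⟨by linarith [(hPL k θ (update p k q)).1], (hPL k θ _).2⟩)
      (fun q θ hq => logitShare_eq_zero_of_le he (by simpa using hq)) hc
  exact ⟨tendsto_mul_abs_of_tendsto_mul hl_nonneg hqlam,
    fun j => tendsto_mul_abs_of_tendsto_mul hl_nonneg (hqgam j),
    tendsto_sum_coef_mul_update_sub_add (hp k).1 hpk _ p c k hqlam hqgam hP⟩

/-- Under the vanishing assumptions on `ψ_k`, as `p_k ↑ ς_*`
(other prices fixed) one has `p_k |λ_k(p)| → 0`, `p_k |γ_{j,k}(p)| → 0` for all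
`j`, and consequently the profit derivative
`(∂π̂_{f(k)}/∂p_k)(p) = Σ_{j∈J_{f(k)}} (δ_{j,k}λ_j(p) − γ_{j,k}(p))(p_j − c_j) + P_k(p)`
tends to `0`.  The filter `comap (↑· : ℝ → EReal) (𝓝[<] ς_*)` encodes
`p_k ↑ ς_*` (it is `atTop` when `ς_* = ∞`). -/
theorem stmt10 {J F : ℕ} {T : Type*} [MeasurableSpace T]
    (μ : Measure T) [IsProbabilityMeasure μ]
    (w Dw : Fin J → T → ℝ → ℝ) (v : Fin J → T → ℝ)
    (ϑ : T → ℝ) (ς : T → EReal) (hςmeas : Measurable ς)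
    (e : Fin J → T → ℝ → ℝ)
    (he : ∀ j θ q, e j θ q =
      if (q : EReal) < ς θ then Real.exp (w j θ q + v j θ) else 0)
    (hmease : ∀ j q, AEStronglyMeasurable (fun θ => e j θ q) μ)
    (hmeasϑ : AEStronglyMeasurable (fun θ => Real.exp (ϑ θ)) μ)
    (hmeasDw : ∀ j q, AEStronglyMeasurable (fun θ => Dw j θ q) μ)
    (PL : Fin J → T → (Fin J → ℝ) → ℝ)
    (hPLdef : ∀ j θ r, PL j θ r = e j θ (r j) / (Real.exp (ϑ θ) + ∑ i, e i θ (r i)))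
    (P : Fin J → (Fin J → ℝ) → ℝ)
    (hPdef : ∀ j r, P j r = ∫ θ, PL j θ r ∂μ)
    (lam : (Fin J → ℝ) → Fin J → ℝ)
    (hlam : ∀ r j, lam r j =
      ∫ θ in {θ | (r j : EReal) < ς θ}, Dw j θ (r j) * PL j θ r ∂μ)
    (gam : (Fin J → ℝ) → Fin J → Fin J → ℝ)
    (hgam : ∀ r j k', gam r j k' =
      ∫ θ in {θ | (r j : EReal) < ς θ ∧ (r k' : EReal) < ς θ},
        PL j θ r * PL k' θ r * Dw k' θ (r k') ∂μ)
    (ψ : Fin J → T → ℝ → ℝ)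
    (hψ : ∀ i θ q, ψ i θ q = if (q : EReal) < ς θ then
      |Dw i θ q| * (Real.exp (w i θ q + v i θ) /
        (Real.exp (ϑ θ) + Real.exp (w i θ q + v i θ))) else 0)
    (firm : Fin J → Fin F) (c : Fin J → ℝ)
    (p : Fin J → ℝ) (hp : ∀ j, 0 < p j ∧ (p j : EReal) < essSup ς μ)
    (k : Fin J)
    -- assumption (a): p ψ_k(θ,p) → 0 as p ↑ ς_*, μ-a.e.
    (ha : ∀ᵐ θ ∂μ, Tendsto (fun q : ℝ => q * ψ k θ q)
      (comap (fun q : ℝ => (q : EReal)) (nhdsWithin (essSup ς μ) (Set.Iio (essSup ς μ))))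
      (nhds 0))
    -- assumption (b): p ψ_k(θ,p) is dominated by an integrable φ for p ∈ (p̄, ς_*)
    (hb : ∃ pbar : ℝ, 0 ≤ pbar ∧ (pbar : EReal) < essSup ς μ ∧
      ∃ φ : T → ℝ, Integrable φ μ ∧
        ∀ᵐ θ ∂μ, ∀ q : ℝ, pbar < q → (q : EReal) < essSup ς μ → q * ψ k θ q ≤ φ θ)
    -- assumption (c): P_k^L(θ,p) → 0 as p_k ↑ ς(θ), μ-a.e.
    (hc : ∀ᵐ θ ∂μ, Tendsto (fun q : ℝ => PL k θ (Function.update p k q))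
      (comap (fun q : ℝ => (q : EReal)) (nhdsWithin (ς θ) (Set.Iio (ς θ)))) (nhds 0)) :
    Tendsto (fun q : ℝ => q * |lam (Function.update p k q) k|)
      (comap (fun q : ℝ => (q : EReal)) (nhdsWithin (essSup ς μ) (Set.Iio (essSup ς μ))))
      (nhds 0) ∧
    (∀ j, Tendsto (fun q : ℝ => q * |gam (Function.update p k q) j k|)
      (comap (fun q : ℝ => (q : EReal)) (nhdsWithin (essSup ς μ) (Set.Iio (essSup ς μ))))
      (nhds 0)) ∧
    Tendsto (fun q : ℝ =>
      (∑ j ∈ Finset.univ.filter (fun j => firm j = firm k),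
        ((if j = k then lam (Function.update p k q) j else 0)
            - gam (Function.update p k q) j k)
          * (Function.update p k q j - c j))
        + P k (Function.update p k q))
      (comap (fun q : ℝ => (q : EReal)) (nhdsWithin (essSup ς μ) (Set.Iio (essSup ς μ))))
      (nhds 0) :=
  stmt10_general μ w Dw v ϑ ς e he hmease hmeasϑ hmeasDw PL hPLdef P hPdef lam hlam gam hgam ψ hψ
    firm c p hp k ha hb hc
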